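/- arXiv:1806.00032 — 9 statements merged into one kernel-verified Lean document; each statement's English description precedes it below -/
import Mathlib

section
/- Let a₁, a₂ be real numbers and let x be a natural number. For all real numbers t₁, t₂, the family ((n₁,n₂) ↦ C_{n₁,n₂}^{(a₁,a₂)}(x) · t₁^{n₁} · t₂^{n₂} / (n₁! · n₂!)) indexed by ℕ × ℕ is summable and its sum equals exp(-(a₁t₁ + a₂t₂)) · (1 + t₁ + t₂)^x. -/
/-- The falling factorial `x⁽ⁿ⁾ = x(x-1)⋯(x-n+1)`. -/
noncomputable def fallingFactorial (x : ℝ) (n : ℕ) : ℝ :=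
  ∏ j ∈ Finset.range n, (x - j)

/-- The multiple Charlier polynomial `C_{n₁,n₂}^{(a₁,a₂)}(x)`. -/
noncomputable def charlier (a₁ a₂ : ℝ) (n₁ n₂ : ℕ) (x : ℝ) : ℝ :=
  ∑ k ∈ Finset.range (n₁ + 1), ∑ l ∈ Finset.range (n₂ + 1),
    (n₁.choose k : ℝ) * (n₂.choose l : ℝ) * (-a₁) ^ (n₁ - k) * (-a₂) ^ (n₂ - l) *
      fallingFactorial x (k + l)

/-!
Expanding the binomials in `charlier`, the `(n₁, n₂)`-th term of the series is a sum over `(k, l)`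
of `x⁽ᵏ⁺ˡ⁾` times a product of two one-variable terms `C(n, k) b^(n-k) t^n / n!`, and summing such
a term over `n` gives `t^k / k! · exp (b t)`. For natural `x` the coefficient `x⁽ᵏ⁺ˡ⁾ / (k! l!)`
is `C(x, k) C(x - k, l)`, so only finitely many `(k, l)` contribute (which lets the sum over
`(k, l)` be exchanged with the double series) and they add up to `(1 + t₁ + t₂)^x`.
-/

open Finset Nat

lemma fallingFactorial_natCast (x m : ℕ) : fallingFactorial x m = x.descFactorial m := by
  rw [fallingFactorial, ← descPochhammer_eval_eq_prod_range, descPochhammer_eval_eq_descFactorial]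

lemma descFactorial_add_eq_mul_choose_mul_choose (x k l : ℕ) :
    x.descFactorial (k + l) = k ! * l ! * (x.choose k * (x - k).choose l) := by
  have hchoose := Nat.choose_mul (n := x) (k := k + l) (Nat.le_add_right k l)
  have hfact := Nat.choose_mul_factorial_mul_factorial (Nat.le_add_right k l)
  rw [Nat.add_sub_cancel_left] at hchoose hfact
  rw [descFactorial_eq_factorial_mul_choose, ← hchoose, ← hfact]
  ring

lemma sum_range_eq_sum_range_of_eq_zero {M : Type*} [AddCommMonoid M] {f : ℕ → M} {m n : ℕ}
    (hm : ∀ k, m ≤ k → f k = 0) (hn : ∀ k, n ≤ k → f k = 0) :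
    ∑ k ∈ range m, f k = ∑ k ∈ range n, f k := by
  wlog h : m ≤ n generalizing m n
  · exact (this hn hm (by omega)).symm
  exact sum_subset (range_subset_range.2 h) fun k _ hk => hm k (by simpa using hk)

lemma one_add_pow_eq_sum_range {R : Type*} [CommSemiring R] (t : R) {n N : ℕ} (h : n ≤ N) :
    (1 + t) ^ n = ∑ l ∈ range (N + 1), (n.choose l : R) * t ^ l := by
  rw [add_comm, add_pow]
  refine (sum_congr rfl fun l _ => by rw [one_pow, mul_one, mul_comm]).trans
    (sum_range_eq_sum_range_of_eq_zero (fun l hl => ?_) fun l hl => ?_) <;>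
    rw [choose_eq_zero_of_lt (by omega), Nat.cast_zero, zero_mul]

lemma sum_fallingFactorial_mul_pow_div_factorial (x : ℕ) (t₁ t₂ : ℝ) :
    ∑ k ∈ range (x + 1), ∑ l ∈ range (x + 1),
        fallingFactorial x (k + l) * (t₁ ^ k / k ! * (t₂ ^ l / l !)) = (1 + t₁ + t₂) ^ x := by
  have hterm : ∀ k l : ℕ, fallingFactorial x (k + l) * (t₁ ^ k / k ! * (t₂ ^ l / l !))
      = x.choose k * t₁ ^ k * ((x - k).choose l * t₂ ^ l) := by
    intro k l
    rw [fallingFactorial_natCast, descFactorial_add_eq_mul_choose_mul_choose]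
    push_cast
    field_simp
  simp only [hterm, ← mul_sum, ← one_add_pow_eq_sum_range t₂ (Nat.sub_le x _)]
  rw [add_comm 1 t₁, add_assoc, add_pow]
  exact sum_congr rfl fun k _ => by ring

noncomputable def binomialExpTerm (b t : ℝ) (k n : ℕ) : ℝ :=
  n.choose k * b ^ (n - k) * t ^ n / n !

lemma hasSum_binomialExpTerm (b t : ℝ) (k : ℕ) :
    HasSum (binomialExpTerm b t k) (t ^ k / k ! * Real.exp (b * t)) := by
  have hlow : ∑ i ∈ range k, binomialExpTerm b t k i = 0 :=
    sum_eq_zero fun i hi => by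
      rw [binomialExpTerm, choose_eq_zero_of_lt (mem_range.1 hi)]; simp
  have hshift : ∀ n, binomialExpTerm b t k (n + k) = t ^ k / k ! * ((b * t) ^ n / n !) := by
    intro n
    have hfact : ((n + k).choose k : ℝ) * n ! * k ! = (n + k) ! := by
      exact_mod_cast Nat.add_choose_mul_factorial_mul_factorial n k
    have hchoose : ((n + k).choose k : ℝ) ≠ 0 := by
      exact_mod_cast (Nat.choose_pos (Nat.le_add_left k n)).ne'
    rw [binomialExpTerm, Nat.add_sub_cancel, ← hfact]
    field_simp
    ring
  rw [← hasSum_nat_add_iff' k, hlow, sub_zero]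
  simp only [hshift]
  exact (Real.exp_eq_exp_ℝ ▸ NormedSpace.expSeries_div_hasSum_exp (b * t)).mul_left _

lemma summable_norm_binomialExpTerm (b t : ℝ) (k : ℕ) :
    Summable fun n => ‖binomialExpTerm b t k n‖ := by
  refine (hasSum_binomialExpTerm |b| |t| k).summable.congr fun n => ?_
  simp [binomialExpTerm]

lemma hasSum_binomialExpTerm_mul_binomialExpTerm (b₁ b₂ t₁ t₂ : ℝ) (k l : ℕ) :
    HasSum (fun p : ℕ × ℕ => binomialExpTerm b₁ t₁ k p.1 * binomialExpTerm b₂ t₂ l p.2)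
      (t₁ ^ k / k ! * Real.exp (b₁ * t₁) * (t₂ ^ l / l ! * Real.exp (b₂ * t₂))) :=
  (hasSum_binomialExpTerm b₁ t₁ k).mul (hasSum_binomialExpTerm b₂ t₂ l)
    (summable_mul_of_summable_norm (summable_norm_binomialExpTerm b₁ t₁ k)
      (summable_norm_binomialExpTerm b₂ t₂ l))

lemma charlier_mul_pow_div_factorial (a₁ a₂ x t₁ t₂ : ℝ) (n₁ n₂ : ℕ) :
    charlier a₁ a₂ n₁ n₂ x * t₁ ^ n₁ * t₂ ^ n₂ / (n₁ ! * n₂ !)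
      = ∑ k ∈ range (n₁ + 1), ∑ l ∈ range (n₂ + 1), fallingFactorial x (k + l) *
          (binomialExpTerm (-a₁) t₁ k n₁ * binomialExpTerm (-a₂) t₂ l n₂) := by
  simp only [charlier, binomialExpTerm, sum_mul, sum_div]
  exact sum_congr rfl fun k _ => sum_congr rfl fun l _ => by ring

lemma charlier_natCast_mul_pow_div_factorial (a₁ a₂ t₁ t₂ : ℝ) (x n₁ n₂ : ℕ) :
    charlier a₁ a₂ n₁ n₂ x * t₁ ^ n₁ * t₂ ^ n₂ / (n₁ ! * n₂ !)
      = ∑ k ∈ range (x + 1), ∑ l ∈ range (x + 1), fallingFactorial x (k + l) *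
          (binomialExpTerm (-a₁) t₁ k n₁ * binomialExpTerm (-a₂) t₂ l n₂) := by
  have hB : ∀ {b t k n}, n + 1 ≤ k → binomialExpTerm b t k n = 0 := fun h => by
    rw [binomialExpTerm, choose_eq_zero_of_lt (by omega)]; simp
  have hff : ∀ {k l}, x + 1 ≤ k + l → fallingFactorial x (k + l) = 0 := fun h => by
    rw [fallingFactorial_natCast, descFactorial_eq_zero_iff_lt.2 (by omega), Nat.cast_zero]
  rw [charlier_mul_pow_div_factorial]
  calc _ = ∑ k ∈ range (n₁ + 1), ∑ l ∈ range (x + 1), fallingFactorial x (k + l) *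
          (binomialExpTerm (-a₁) t₁ k n₁ * binomialExpTerm (-a₂) t₂ l n₂) :=
        sum_congr rfl fun k _ => sum_range_eq_sum_range_of_eq_zero
          (fun l hl => by rw [hB hl, mul_zero, mul_zero])
          (fun l hl => by rw [hff (by omega), zero_mul])
    _ = _ := sum_range_eq_sum_range_of_eq_zero
          (fun k hk => sum_eq_zero fun l _ => by rw [hB hk, zero_mul, mul_zero])
          (fun k hk => sum_eq_zero fun l _ => by rw [hff (by omega), zero_mul])

/-- Generating function for the multiple Charlier polynomials:
`e^{-(a₁t₁+a₂t₂)} (1+t₁+t₂)^x = ∑ C_{n₁,n₂}^{(a₁,a₂)}(x) t₁^{n₁} t₂^{n₂}/(n₁! n₂!)`. -/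
theorem charlier_generatingFunction (a₁ a₂ : ℝ) (x : ℕ) (t₁ t₂ : ℝ) :
    Summable (fun p : ℕ × ℕ =>
      charlier a₁ a₂ p.1 p.2 (x : ℝ) * t₁ ^ p.1 * t₂ ^ p.2 /
        ((p.1.factorial : ℝ) * (p.2.factorial : ℝ))) ∧
    ∑' p : ℕ × ℕ,
        charlier a₁ a₂ p.1 p.2 (x : ℝ) * t₁ ^ p.1 * t₂ ^ p.2 /
          ((p.1.factorial : ℝ) * (p.2.factorial : ℝ)) =
      Real.exp (-(a₁ * t₁ + a₂ * t₂)) * (1 + t₁ + t₂) ^ x := by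
  have hsum := hasSum_sum fun k (_ : k ∈ range (x + 1)) =>
    hasSum_sum fun l (_ : l ∈ range (x + 1)) =>
      (hasSum_binomialExpTerm_mul_binomialExpTerm (-a₁) (-a₂) t₁ t₂ k l).mul_left
        (fallingFactorial x (k + l))
  have hvalue : ∑ k ∈ range (x + 1), ∑ l ∈ range (x + 1), fallingFactorial x (k + l) *
      (t₁ ^ k / k ! * Real.exp (-a₁ * t₁) * (t₂ ^ l / l ! * Real.exp (-a₂ * t₂)))
      = Real.exp (-(a₁ * t₁ + a₂ * t₂)) * (1 + t₁ + t₂) ^ x := by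
    rw [← sum_fallingFactorial_mul_pow_div_factorial x t₁ t₂, mul_sum]
    refine sum_congr rfl fun k _ => ?_
    rw [mul_sum]
    refine sum_congr rfl fun l _ => ?_
    rw [neg_add, Real.exp_add, neg_mul, neg_mul]
    ring
  simp only [← charlier_natCast_mul_pow_div_factorial, hvalue] at hsum
  exact ⟨hsum.summable, hsum.tsum_eq⟩
end

section
/- For all real numbers a₁, a₂, all natural numbers n₁, n₂, and every real number x, the inversion formula holds: x^{(n₁+n₂)} = Σ_{k=0}^{n₁} Σ_{ℓ=0}^{n₂} C(n₁,k) C(n₂,ℓ) a₁^{n₁-k} a₂^{n₂-ℓ} C_{k,ℓ}^{(a₁,a₂)}(x). -/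
open Finset

section BinomialTransform

variable {R : Type*} [CommSemiring R]

theorem sum_Ico_choose_mul_choose_mul_pow_mul_pow (a b : R) {i n : ℕ} (hi : i ≤ n) :
    ∑ k ∈ Ico i (n + 1), (n.choose k * k.choose i * a ^ (n - k) * b ^ (k - i) : R) =
      n.choose i * (a + b) ^ (n - i) := by
  rw [sum_Ico_eq_sum_range, Nat.sub_add_comm hi, add_comm a b, add_pow, mul_sum]
  refine sum_congr rfl fun m _ => ?_
  have hrevision : (n.choose (i + m) : R) * (i + m).choose i = n.choose i * (n - i).choose m := by
    have := Nat.choose_mul (n := n) (Nat.le_add_right i m)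
    rw [Nat.add_sub_cancel_left] at this
    exact_mod_cast congrArg (Nat.cast (R := R)) this
  rw [hrevision, Nat.add_sub_cancel_left, Nat.sub_add_eq]
  ring

def binomialTransform (a : R) (f : ℕ → R) (n : ℕ) : R :=
  ∑ k ∈ range (n + 1), n.choose k * a ^ (n - k) * f k

theorem binomialTransform_binomialTransform (a b : R) (f : ℕ → R) :
    binomialTransform a (binomialTransform b f) = binomialTransform (a + b) f := by
  funext n
  simp only [binomialTransform, mul_sum, range_eq_Ico]
  rw [← sum_Ico_Ico_comm]
  refine sum_congr rfl fun i hmem => ?_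
  have hi : i ≤ n := Nat.lt_succ_iff.mp (mem_Ico.mp hmem).2
  rw [← sum_Ico_choose_mul_choose_mul_pow_mul_pow a b hi, sum_mul]
  exact sum_congr rfl fun k _ => by ring

theorem binomialTransform_zero (f : ℕ → R) : binomialTransform 0 f = f := by
  funext n
  rw [binomialTransform, sum_eq_single_of_mem n (self_mem_range_succ n)]
  · simp
  · intro k hk hkn
    have : n - k ≠ 0 := by have := mem_range.mp hk; omega
    simp [zero_pow this]

theorem binomialTransform_comm (a b : R) (g : ℕ → ℕ → R) (n m : ℕ) :
    binomialTransform a (fun k => binomialTransform b (g k) m) n =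
      binomialTransform b (fun l => binomialTransform a (g · l) n) m := by
  simp only [binomialTransform, mul_sum]
  rw [sum_comm]
  exact sum_congr rfl fun l _ => sum_congr rfl fun k _ => by ring

def binomialTransform₂ (a b : R) (g : ℕ → ℕ → R) (n m : ℕ) : R :=
  binomialTransform a (fun k => binomialTransform b (g k) m) n

theorem binomialTransform₂_apply (a b : R) (g : ℕ → ℕ → R) (n m : ℕ) :
    binomialTransform₂ a b g n m =
      ∑ k ∈ range (n + 1), ∑ l ∈ range (m + 1),
        n.choose k * m.choose l * a ^ (n - k) * b ^ (m - l) * g k l := by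
  simp only [binomialTransform₂, binomialTransform, mul_sum]
  exact sum_congr rfl fun k _ => sum_congr rfl fun l _ => by ring

theorem binomialTransform₂_binomialTransform₂ (a b c d : R) (g : ℕ → ℕ → R) :
    binomialTransform₂ a b (binomialTransform₂ c d g) = binomialTransform₂ (a + c) (b + d) g := by
  funext n m
  rw [binomialTransform₂, binomialTransform₂, ← binomialTransform_binomialTransform]
  congr 1
  funext k
  calc _ = binomialTransform c (fun i => binomialTransform b (binomialTransform d (g i)) m) k :=
        binomialTransform_comm b c (fun l i => binomialTransform d (g i) l) m k
    _ = _ := by simp only [binomialTransform_binomialTransform]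

theorem binomialTransform₂_zero (g : ℕ → ℕ → R) : binomialTransform₂ 0 0 g = g := by
  funext n m
  simp [binomialTransform₂, binomialTransform_zero]

end BinomialTransform

theorem charlier_eq_binomialTransform₂ (a₁ a₂ : ℝ) (n₁ n₂ : ℕ) (x : ℝ) :
    charlier a₁ a₂ n₁ n₂ x =
      binomialTransform₂ (-a₁) (-a₂) (fun k l => fallingFactorial x (k + l)) n₁ n₂ := by
  rw [charlier, binomialTransform₂_apply]

/-- Inversion formula for the multiple Charlier polynomials. -/
theorem charlier_inversion (a₁ a₂ : ℝ) (n₁ n₂ : ℕ) (x : ℝ) :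
    fallingFactorial x (n₁ + n₂) =
      ∑ k ∈ Finset.range (n₁ + 1), ∑ l ∈ Finset.range (n₂ + 1),
        (n₁.choose k : ℝ) * (n₂.choose l : ℝ) * a₁ ^ (n₁ - k) * a₂ ^ (n₂ - l) *
          charlier a₁ a₂ k l x := by
  set F : ℕ → ℕ → ℝ := fun k l => fallingFactorial x (k + l)
  calc fallingFactorial x (n₁ + n₂)
      = binomialTransform₂ (a₁ + -a₁) (a₂ + -a₂) F n₁ n₂ := by
        rw [add_neg_cancel, add_neg_cancel, binomialTransform₂_zero]
    _ = binomialTransform₂ a₁ a₂ (binomialTransform₂ (-a₁) (-a₂) F) n₁ n₂ := by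
        rw [binomialTransform₂_binomialTransform₂]
    _ = _ := by
        simp only [binomialTransform₂_apply a₁ a₂, charlier_eq_binomialTransform₂, F]
end

section
/- Let a, b, a₁, a₂, b₁, b₂ be real numbers with a₁ + a₂ = a and b₁ + b₂ = b. Then for all natural numbers n₁, n₂ and all real numbers x, y, the addition formula holds: C_{n₁,n₂}^{(a,b)}(x+y) = Σ_{k=0}^{n₁} Σ_{ℓ=0}^{n₂} C(n₁,k) C(n₂,ℓ) C_{k,ℓ}^{(a₁,b₁)}(x) · C_{n₁-k,n₂-ℓ}^{(a₂,b₂)}(y). -/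
open Finset PowerSeries
open scoped Nat

section BinomialConvolution

variable {R : Type*} [CommSemiring R]

def binomialConv (f g : ℕ → R) (n : ℕ) : R :=
  ∑ k ∈ range (n + 1), (n.choose k : R) * f k * g (n - k)

def binomialConv₂ (f g : ℕ → ℕ → R) (n₁ n₂ : ℕ) : R :=
  ∑ k ∈ range (n₁ + 1), ∑ l ∈ range (n₂ + 1),
    (n₁.choose k : R) * (n₂.choose l : R) * f k l * g (n₁ - k) (n₂ - l)

theorem binomialConv₂_eq_sum_nsmul_binomialConv (f g : ℕ → ℕ → R) (n₁ : ℕ) :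
    binomialConv₂ f g n₁ =
      ∑ k ∈ range (n₁ + 1), n₁.choose k • binomialConv (f k) (g (n₁ - k)) := by
  funext n₂
  rw [binomialConv₂, Finset.sum_apply]
  simp only [Pi.smul_apply, binomialConv, nsmul_eq_mul, mul_sum]
  refine sum_congr rfl fun k _ => sum_congr rfl fun l _ => ?_
  ring

theorem binomialConv₂_pow_mul_pow (a₁ b₁ a₂ b₂ : R) :
    binomialConv₂ (fun i j => a₁ ^ i * b₁ ^ j) (fun i j => a₂ ^ i * b₂ ^ j) =
      fun i j => (a₁ + a₂) ^ i * (b₁ + b₂) ^ j := by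
  funext n₁ n₂
  rw [add_pow, add_pow, sum_mul_sum]
  refine sum_congr rfl fun k _ => sum_congr rfl fun l _ => ?_
  ring

theorem sum_choose_succ_mul_eq_sum_choose_mul_add (f : ℕ → ℕ → R) (n : ℕ) :
    ∑ i ∈ range (n + 2), ((n + 1).choose i : R) * f i (n + 1 - i) =
      ∑ i ∈ range (n + 1), (n.choose i : R) * (f i (n - i + 1) + f (i + 1) (n - i)) := by
  rw [sum_choose_succ_mul, ← sum_add_distrib]
  refine sum_congr rfl fun i hi => ?_
  rw [Nat.sub_add_comm (Nat.lt_succ_iff.mp (mem_range.mp hi)), mul_add]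

theorem sum_choose_mul_choose_mul (G : ℕ → ℕ → R) (n₁ n₂ : ℕ) :
    ∑ k ∈ range (n₁ + 1), ∑ l ∈ range (n₂ + 1),
        (n₁.choose k : R) * (n₂.choose l : R) * G (k + l) (n₁ - k + (n₂ - l)) =
      ∑ m ∈ range (n₁ + n₂ + 1), ((n₁ + n₂).choose m : R) * G m (n₁ + n₂ - m) := by
  induction n₂ generalizing G with
  | zero => simp
  | succ n₂ ih =>
    have hsplit : ∀ k, ∑ l ∈ range (n₂ + 2),
        ((n₂ + 1).choose l : R) * G (k + l) (n₁ - k + (n₂ + 1 - l)) =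
          ∑ l ∈ range (n₂ + 1), (n₂.choose l : R) *
            (fun m r => G m (r + 1) + G (m + 1) r) (k + l) (n₁ - k + (n₂ - l)) :=
      fun k => sum_choose_succ_mul_eq_sum_choose_mul_add (fun l r => G (k + l) (n₁ - k + r)) n₂
    simp only [mul_assoc, ← mul_sum, hsplit]
    simp only [mul_sum, ← mul_assoc]
    refine (ih fun m r => G m (r + 1) + G (m + 1) r).trans ?_
    rw [← add_assoc]
    exact (sum_choose_succ_mul_eq_sum_choose_mul_add G (n₁ + n₂)).symm

theorem binomialConv₂_comp_add (p q : ℕ → R) :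
    binomialConv₂ (fun i j => p (i + j)) (fun i j => q (i + j)) =
      fun n₁ n₂ => binomialConv p q (n₁ + n₂) := by
  funext n₁ n₂
  have h := sum_choose_mul_choose_mul (fun i j => p i * q j) n₁ n₂
  simp only [binomialConv₂, binomialConv, mul_assoc] at h ⊢
  exact h

end BinomialConvolution

section ExponentialGeneratingFunction

variable {R : Type*} [CommRing R] [Algebra ℚ R]

noncomputable def egf : (ℕ → R) →ₗ[R] R⟦X⟧ where
  toFun f := mk fun n => (n ! : ℚ)⁻¹ • f n
  map_add' f g := by ext; simp
  map_smul' c f := by ext; simp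

theorem coeff_egf (f : ℕ → R) (n : ℕ) : coeff n (egf f) = (n ! : ℚ)⁻¹ • f n := by
  simp [egf]

theorem egf_injective : Function.Injective (egf : (ℕ → R) → R⟦X⟧) := by
  intro f g h
  funext n
  have hn := congrArg (coeff n) h
  rw [coeff_egf, coeff_egf] at hn
  exact smul_right_injective R (inv_ne_zero (by positivity)) hn

theorem egf_binomialConv (f g : ℕ → R) : egf (binomialConv f g) = egf f * egf g := by
  ext n
  rw [coeff_mul, Nat.sum_antidiagonal_eq_sum_range_succ_mk, coeff_egf, binomialConv, smul_sum]
  refine sum_congr rfl fun k hk => ?_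
  have hscalar : (n ! : ℚ)⁻¹ * n.choose k = (k ! : ℚ)⁻¹ * ((n - k) ! : ℚ)⁻¹ := by
    rw [Nat.cast_choose ℚ (Nat.lt_succ_iff.mp (mem_range.mp hk))]
    field_simp
  rw [coeff_egf, coeff_egf, smul_mul_smul_comm, ← hscalar, mul_smul, Nat.cast_smul_eq_nsmul,
    nsmul_eq_mul, mul_assoc]

noncomputable def egf₂ (f : ℕ → ℕ → R) : R⟦X⟧⟦X⟧ :=
  egf fun n => egf (f n)

theorem egf₂_injective : Function.Injective (egf₂ : (ℕ → ℕ → R) → R⟦X⟧⟦X⟧) :=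
  fun _ _ h => funext fun n => egf_injective (congrFun (egf_injective h) n)

theorem egf₂_binomialConv₂ (f g : ℕ → ℕ → R) :
    egf₂ (binomialConv₂ f g) = egf₂ f * egf₂ g := by
  rw [egf₂, egf₂, egf₂, ← egf_binomialConv]
  congr 1
  funext n
  simp only [binomialConv₂_eq_sum_nsmul_binomialConv, map_sum, map_nsmul, egf_binomialConv]
  simp only [binomialConv, nsmul_eq_mul, mul_assoc]

theorem binomialConv₂_binomialConv₂_comm (f g h k : ℕ → ℕ → R) :
    binomialConv₂ (binomialConv₂ f g) (binomialConv₂ h k) =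
      binomialConv₂ (binomialConv₂ f h) (binomialConv₂ g k) :=
  egf₂_injective (by simp only [egf₂_binomialConv₂]; ring)

end ExponentialGeneratingFunction

theorem fallingFactorial_eq_smeval (x : ℝ) (n : ℕ) :
    fallingFactorial x n = (descPochhammer ℤ n).smeval x := by
  rw [fallingFactorial, ← descPochhammer_eval_eq_prod_range, ← Polynomial.aeval_eq_smeval,
    Polynomial.aeval_def, ← Polynomial.eval_map, descPochhammer_map]

theorem fallingFactorial_add (x y : ℝ) (n : ℕ) :
    fallingFactorial (x + y) n = binomialConv (fallingFactorial x) (fallingFactorial y) n := by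
  simp only [fallingFactorial_eq_smeval, binomialConv,
    Ring.descPochhammer_smeval_add n (Commute.all x y), Nat.sum_antidiagonal_eq_sum_range_succ_mk,
    mul_assoc]

theorem charlier_eq_binomialConv₂ (a b x : ℝ) :
    (fun n₁ n₂ => charlier a b n₁ n₂ x) =
      binomialConv₂ (fun i j => fallingFactorial x (i + j)) (fun i j => (-a) ^ i * (-b) ^ j) := by
  funext n₁ n₂
  refine sum_congr rfl fun k _ => sum_congr rfl fun l _ => ?_
  ring

/-- Addition formula for the multiple Charlier polynomials. -/
theorem charlier_addition (a b a₁ a₂ b₁ b₂ : ℝ) (ha : a₁ + a₂ = a) (hb : b₁ + b₂ = b)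
    (n₁ n₂ : ℕ) (x y : ℝ) :
    charlier a b n₁ n₂ (x + y) =
      ∑ k ∈ Finset.range (n₁ + 1), ∑ l ∈ Finset.range (n₂ + 1),
        (n₁.choose k : ℝ) * (n₂.choose l : ℝ) *
          charlier a₁ b₁ k l x * charlier a₂ b₂ (n₁ - k) (n₂ - l) y := by
  have hF : (fun i j => fallingFactorial (x + y) (i + j)) =
      binomialConv₂ (fun i j => fallingFactorial x (i + j))
        (fun i j => fallingFactorial y (i + j)) := by
    funext i j
    rw [binomialConv₂_comp_add, fallingFactorial_add]
  have hE : (fun i j => (-a) ^ i * (-b) ^ j) =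
      binomialConv₂ (fun i j => (-a₁) ^ i * (-b₁) ^ j) (fun i j => (-a₂) ^ i * (-b₂) ^ j) := by
    rw [binomialConv₂_pow_mul_pow, ← neg_add, ← neg_add, ha, hb]
  have h := congr_fun₂ (charlier_eq_binomialConv₂ a b (x + y)) n₁ n₂
  rw [hF, hE, binomialConv₂_binomialConv₂_comm, ← charlier_eq_binomialConv₂,
    ← charlier_eq_binomialConv₂] at h
  exact h
end

section
/- For all real numbers a₁, a₂, all natural numbers n₁, n₂, and every real number x, the recurrence (a₂ - a₁) · C_{n₁,n₂}^{(a₁,a₂)}(x) = C_{n₁+1,n₂}^{(a₁,a₂)}(x) - C_{n₁,n₂+1}^{(a₁,a₂)}(x) holds. -/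
/-!
By the binomial theorem, `C_{n₁,n₂}^{(a₁,a₂)}(x)` is the image of `(X - a₁)^{n₁} (X - a₂)^{n₂}` under
the linear functional on `ℝ[X]` sending `X^m` to `x^{(m)}`. The recurrence is then linearity of
that functional applied to `(X - a₁) - (X - a₂) = a₂ - a₁`.
-/

open Polynomial Finset

namespace Polynomial

variable {R M : Type*} [CommRing R] [AddCommGroup M] [Module R M]

noncomputable def momentFunctional (u : ℕ → M) : R[X] →ₗ[R] M :=
  lsum fun m => LinearMap.toSpanSingleton R M (u m)

theorem momentFunctional_C_mul_X_pow (u : ℕ → M) (c : R) (m : ℕ) :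
    momentFunctional u (C c * X ^ m) = c • u m := by
  simp [momentFunctional, C_mul_X_pow_eq_monomial, sum_monomial_index]

theorem X_sub_C_pow_eq_sum (a : R) (n : ℕ) :
    (X - C a) ^ n = ∑ k ∈ range (n + 1), C (n.choose k * (-a) ^ (n - k)) * X ^ k := by
  rw [sub_eq_add_neg, ← C_neg, add_pow]
  refine sum_congr rfl fun k _ => ?_
  simp only [map_mul, map_pow, map_natCast]
  ring

theorem momentFunctional_X_sub_C_pow_mul_X_sub_C_pow (u : ℕ → M) (a b : R) (n m : ℕ) :
    momentFunctional u ((X - C a) ^ n * (X - C b) ^ m) =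
      ∑ k ∈ range (n + 1), ∑ l ∈ range (m + 1),
        ((n.choose k : R) * m.choose l * (-a) ^ (n - k) * (-b) ^ (m - l)) • u (k + l) := by
  rw [X_sub_C_pow_eq_sum, X_sub_C_pow_eq_sum, sum_mul_sum, map_sum]
  refine sum_congr rfl fun k _ => ?_
  rw [map_sum]
  refine sum_congr rfl fun l _ => ?_
  rw [← momentFunctional_C_mul_X_pow]
  congr 1
  simp only [map_mul, pow_add]
  ring

end Polynomial

theorem charlier_eq_momentFunctional (a₁ a₂ : ℝ) (n₁ n₂ : ℕ) (x : ℝ) :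
    charlier a₁ a₂ n₁ n₂ x =
      momentFunctional (fallingFactorial x) ((X - C a₁) ^ n₁ * (X - C a₂) ^ n₂) := by
  rw [momentFunctional_X_sub_C_pow_mul_X_sub_C_pow]
  rfl

/-- The recurrence `(a₂-a₁) C_{n₁,n₂} = C_{n₁+1,n₂} - C_{n₁,n₂+1}`. -/
theorem charlier_recurrence_diff (a₁ a₂ : ℝ) (n₁ n₂ : ℕ) (x : ℝ) :
    (a₂ - a₁) * charlier a₁ a₂ n₁ n₂ x =
      charlier a₁ a₂ (n₁ + 1) n₂ x - charlier a₁ a₂ n₁ (n₂ + 1) x := by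
  set p : ℝ[X] := (X - C a₁) ^ n₁ * (X - C a₂) ^ n₂
  have hp : (X - C a₁) ^ (n₁ + 1) * (X - C a₂) ^ n₂ - (X - C a₁) ^ n₁ * (X - C a₂) ^ (n₂ + 1) =
      (a₂ - a₁) • p := by
    rw [smul_eq_C_mul, C_sub]
    ring
  simp only [charlier_eq_momentFunctional, ← map_sub, hp, map_smul, smul_eq_mul, p]
end

section
/- For all real numbers a₁, a₂, all natural numbers n₁ ≥ 0 and n₂ ≥ 1, and every real number x, the recurrence x · C_{n₁,n₂}^{(a₁,a₂)}(x) = C_{n₁+1,n₂}^{(a₁,a₂)}(x) + (a₁ + n₁ + n₂) · C_{n₁,n₂}^{(a₁,a₂)}(x) + (a₁n₁ + a₂n₂) · C_{n₁,n₂-1}^{(a₁,a₂)}(x) + a₁n₁(a₁ - a₂) · C_{n₁-1,n₂-1}^{(a₁,a₂)}(x) holds, where when n₁ = 0 the last term is zero (its coefficient a₁n₁(a₁-a₂) vanishes). -/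
/-!
Let `φₓ : ℝ[X] → ℝ` be the linear functional with `φₓ (Xᵐ) = x⁽ᵐ⁾`. Expanding the binomials shows
`C_{n₁,n₂}(x) = φₓ ((X - a₁)^n₁ (X - a₂)^n₂)`, and `x · x⁽ᵐ⁾ = x⁽ᵐ⁺¹⁾ + m x⁽ᵐ⁾` says that
`x · φₓ P = φₓ (X (P + P'))`. So the recurrence is the image under `φₓ` of an identity expressing
`X (P + P')` for `P = (X - a₁)^n₁ (X - a₂)^n₂` through `(X - a₁) P`, `P` and the two lower products;
it comes from the product rule together with `X = (X - a₁) + a₁` and `X - a₂ = (X - a₁) + (a₁ - a₂)`.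
-/

open Polynomial

lemma fallingFactorial_succ (x : ℝ) (n : ℕ) :
    fallingFactorial x (n + 1) = fallingFactorial x n * (x - n) := by
  simp [fallingFactorial, Finset.prod_range_succ]

noncomputable def fallingFactorialEval (x : ℝ) : ℝ[X] →ₗ[ℝ] ℝ :=
  lsum fun m => fallingFactorial x m • LinearMap.id

lemma fallingFactorialEval_monomial (x : ℝ) (m : ℕ) (c : ℝ) :
    fallingFactorialEval x (monomial m c) = fallingFactorial x m * c := by
  simp [fallingFactorialEval, sum_monomial_index]

lemma fallingFactorialEval_C_mul (x c : ℝ) (p : ℝ[X]) :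
    fallingFactorialEval x (C c * p) = c * fallingFactorialEval x p := by
  rw [← smul_eq_C_mul, map_smul, smul_eq_mul]

lemma mul_fallingFactorialEval (x : ℝ) (p : ℝ[X]) :
    x * fallingFactorialEval x p = fallingFactorialEval x (X * (p + derivative p)) := by
  induction p using Polynomial.induction_on' with
  | add p q hp hq =>
    rw [map_add, mul_add, hp, hq, ← map_add, ← mul_add, derivative_add, add_add_add_comm]
  | monomial m c =>
    rw [derivative_monomial, mul_add, X_mul_monomial, X_mul_monomial, map_add,
      fallingFactorialEval_monomial, fallingFactorialEval_monomial, fallingFactorialEval_monomial]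
    cases m with
    | zero => simp [fallingFactorial]
    | succ m =>
      rw [Nat.add_sub_cancel, fallingFactorial_succ x (m + 1)]
      push_cast
      ring

lemma X_sub_C_pow_eq_sum_monomial {R : Type*} [CommRing R] (a : R) (n : ℕ) :
    (X - C a) ^ n = ∑ k ∈ Finset.range (n + 1), monomial k ((n.choose k : R) * (-a) ^ (n - k)) := by
  rw [sub_eq_add_neg, ← map_neg, (Commute.all X (C (-a))).add_pow]
  refine Finset.sum_congr rfl fun k _ => ?_
  rw [← C_mul_X_pow_eq_monomial, C_mul, map_pow, C_eq_natCast]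
  ring

lemma charlier_eq_fallingFactorialEval (a₁ a₂ : ℝ) (n₁ n₂ : ℕ) (x : ℝ) :
    charlier a₁ a₂ n₁ n₂ x = fallingFactorialEval x ((X - C a₁) ^ n₁ * (X - C a₂) ^ n₂) := by
  simp only [X_sub_C_pow_eq_sum_monomial, Finset.sum_mul_sum, map_sum, monomial_mul_monomial,
    fallingFactorialEval_monomial, charlier]
  refine Finset.sum_congr rfl fun k _ => Finset.sum_congr rfl fun l _ => ?_
  ring

lemma X_mul_add_derivative_X_sub_C_pow_mul_X_sub_C_pow {R : Type*} [CommRing R] (a₁ a₂ : R)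
    (n₁ n₂ : ℕ) (hn₂ : 1 ≤ n₂) :
    let P := (X - C a₁) ^ n₁ * (X - C a₂) ^ n₂
    X * (P + derivative P) =
      (X - C a₁) ^ (n₁ + 1) * (X - C a₂) ^ n₂ + C (a₁ + n₁ + n₂) * P
        + C (a₁ * n₁ + a₂ * n₂) * ((X - C a₁) ^ n₁ * (X - C a₂) ^ (n₂ - 1))
        + C (a₁ * n₁ * (a₁ - a₂)) * ((X - C a₁) ^ (n₁ - 1) * (X - C a₂) ^ (n₂ - 1)) := by
  obtain ⟨m₂, rfl⟩ := Nat.exists_eq_add_of_le' hn₂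
  simp only [derivative_mul, derivative_X_sub_C_pow, Nat.add_sub_cancel, map_add, map_mul,
    map_sub, map_natCast]
  cases n₁ <;> push_cast <;> ring

/-- The recurrence `x C_{n₁,n₂} = C_{n₁+1,n₂} + (a₁+n₁+n₂) C_{n₁,n₂}
  + (a₁n₁+a₂n₂) C_{n₁,n₂-1} + a₁n₁(a₁-a₂) C_{n₁-1,n₂-1}` for `n₂ ≥ 1`.
  When `n₁ = 0` the last term vanishes since its coefficient `a₁n₁(a₁-a₂)` is zero. -/
theorem charlier_recurrence_two (a₁ a₂ : ℝ) (n₁ n₂ : ℕ) (hn₂ : 1 ≤ n₂) (x : ℝ) :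
    x * charlier a₁ a₂ n₁ n₂ x =
      charlier a₁ a₂ (n₁ + 1) n₂ x
        + (a₁ + n₁ + n₂) * charlier a₁ a₂ n₁ n₂ x
        + (a₁ * n₁ + a₂ * n₂) * charlier a₁ a₂ n₁ (n₂ - 1) x
        + a₁ * n₁ * (a₁ - a₂) * charlier a₁ a₂ (n₁ - 1) (n₂ - 1) x := by
  simp only [charlier_eq_fallingFactorialEval]
  rw [mul_fallingFactorialEval, X_mul_add_derivative_X_sub_C_pow_mul_X_sub_C_pow a₁ a₂ n₁ n₂ hn₂,
    map_add, map_add, map_add, fallingFactorialEval_C_mul, fallingFactorialEval_C_mul,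
    fallingFactorialEval_C_mul]
end

section
/- For all real numbers a₁, a₂, all natural numbers n₁, n₂, and every real number x, the multiple Charlier polynomials satisfy the Δ-Appell relation C_{n₁,n₂}^{(a₁,a₂)}(x+1) - C_{n₁,n₂}^{(a₁,a₂)}(x) = n₁ · C_{n₁-1,n₂}^{(a₁,a₂)}(x) + n₂ · C_{n₁,n₂-1}^{(a₁,a₂)}(x), where a term whose index would be negative is zero (its coefficient n_i vanishes). -/
/-! Since `Δ x⁽ᵐ⁾ = m x⁽ᵐ⁻¹⁾` and `m = k + l`, the difference of `C_{n₁,n₂}` splits into a part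
weighted by `k` and a part weighted by `l`. The identity `k · C(n, k) = n · C(n - 1, k - 1)` turns
the first into `n₁ C_{n₁-1,n₂}` and the second into `n₂ C_{n₁,n₂-1}`. -/

open Finset Polynomial

section BinomialSum

variable {R : Type*} [CommSemiring R]

def binomialSum (c : R) (n : ℕ) (f : ℕ → R) : R :=
  ∑ k ∈ range (n + 1), (n.choose k : R) * c ^ (n - k) * f k

theorem binomialSum_add (c : R) (n : ℕ) (f g : ℕ → R) :
    binomialSum c n (fun k => f k + g k) = binomialSum c n f + binomialSum c n g := by
  simp only [binomialSum, mul_add, sum_add_distrib]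

theorem binomialSum_mul_left (c r : R) (n : ℕ) (f : ℕ → R) :
    binomialSum c n (fun k => r * f k) = r * binomialSum c n f := by
  simp only [binomialSum, mul_sum]
  exact sum_congr rfl fun _ _ => by ring

theorem binomialSum_natCast_mul_pred (c : R) (n : ℕ) (f : ℕ → R) :
    binomialSum c n (fun k => k * f (k - 1)) = n * binomialSum c (n - 1) f := by
  cases n with
  | zero => simp [binomialSum]
  | succ n =>
    rw [binomialSum, sum_range_succ', binomialSum, mul_sum]
    simp only [Nat.cast_zero, zero_mul, mul_zero, add_zero, Nat.add_sub_cancel]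
    refine sum_congr rfl fun k _ => ?_
    have hchoose : ((n + 1).choose (k + 1) : R) * (k + 1 : ℕ) = (n + 1 : ℕ) * n.choose k := by
      rw [← Nat.cast_mul, ← Nat.cast_mul, Nat.add_one_mul_choose_eq]
    rw [Nat.add_sub_add_right]
    calc _ = ((n + 1).choose (k + 1) * (k + 1 : ℕ) : R) * (c ^ (n - k) * f k) := by ring
      _ = _ := by rw [hchoose]; ring

end BinomialSum

theorem binomialSum_sub {R : Type*} [CommRing R] (c : R) (n : ℕ) (f g : ℕ → R) :
    binomialSum c n (fun k => f k - g k) = binomialSum c n f - binomialSum c n g := by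
  simp only [binomialSum, mul_sub, sum_sub_distrib]

theorem fallingFactorial_eq_eval_descPochhammer (x : ℝ) (n : ℕ) :
    fallingFactorial x n = (descPochhammer ℝ n).eval x :=
  (descPochhammer_eval_eq_prod_range n x).symm

theorem fallingFactorial_add_one_sub (x : ℝ) (n : ℕ) :
    fallingFactorial (x + 1) n - fallingFactorial x n = n * fallingFactorial x (n - 1) := by
  cases n with
  | zero => simp [fallingFactorial]
  | succ n =>
    have h := congrArg (eval (x + 1)) (descPochhammer_succ_comp_X_sub_one (R := ℝ) n)
    simp only [eval_comp, eval_sub, eval_X, eval_one, add_sub_cancel_right,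
      smul_eq_mul, eval_mul, eval_add, eval_natCast] at h
    simp only [fallingFactorial_eq_eval_descPochhammer, Nat.add_sub_cancel]
    push_cast
    linarith

theorem fallingFactorial_add_one_sub_add (x : ℝ) (k l : ℕ) :
    fallingFactorial (x + 1) (k + l) - fallingFactorial x (k + l) =
      k * fallingFactorial x (k - 1 + l) + l * fallingFactorial x (k + (l - 1)) := by
  rw [fallingFactorial_add_one_sub]
  rcases k with _ | k
  · simp
  rcases l with _ | l
  · simp
  rw [Nat.add_sub_cancel, Nat.add_sub_cancel, show k + 1 + (l + 1) - 1 = k + 1 + l by omega,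
    show k + (l + 1) = k + 1 + l by omega]
  push_cast
  ring

theorem charlier_eq_binomialSum (a₁ a₂ : ℝ) (n₁ n₂ : ℕ) (x : ℝ) :
    charlier a₁ a₂ n₁ n₂ x =
      binomialSum (-a₁) n₁ fun k => binomialSum (-a₂) n₂ fun l => fallingFactorial x (k + l) := by
  simp only [charlier, binomialSum, mul_sum]
  exact sum_congr rfl fun _ _ => sum_congr rfl fun _ _ => by ring

/-- The Δ-Appell relation for multiple Charlier polynomials:
  `C_{n₁,n₂}(x+1) - C_{n₁,n₂}(x) = n₁ C_{n₁-1,n₂}(x) + n₂ C_{n₁,n₂-1}(x)`;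
  a term whose index would be negative is zero since its coefficient `nᵢ` vanishes. -/
theorem charlier_delta_appell (a₁ a₂ : ℝ) (n₁ n₂ : ℕ) (x : ℝ) :
    charlier a₁ a₂ n₁ n₂ (x + 1) - charlier a₁ a₂ n₁ n₂ x =
      (n₁ : ℝ) * charlier a₁ a₂ (n₁ - 1) n₂ x
        + (n₂ : ℝ) * charlier a₁ a₂ n₁ (n₂ - 1) x := by
  have shift₁ := binomialSum_natCast_mul_pred (-a₁) n₁ fun k =>
    binomialSum (-a₂) n₂ fun l => fallingFactorial x (k + l)
  have shift₂ (k : ℕ) := binomialSum_natCast_mul_pred (-a₂) n₂ fun l => fallingFactorial x (k + l)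
  simp only [charlier_eq_binomialSum, ← binomialSum_sub, fallingFactorial_add_one_sub_add,
    binomialSum_add, binomialSum_mul_left, shift₁, shift₂]
end

section
/- Let r ≥ 1 and a, b : Fin r → ℝ. For every multi-index n ∈ ℕ^r and every real number x, the connection formula holds: C_n^{(b)}(x) = Σ_{k₁=0}^{n₁} ⋯ Σ_{k_r=0}^{n_r} (∏_{i=1}^{r} C(n_i,k_i) (a_i-b_i)^{k_i}) C_{n-k}^{(a)}(x), where n-k denotes the componentwise difference. -/
/-- The multiple Charlier polynomial `C_n^{(a)}(x)` for a multi-index `n : Fin r → ℕ`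
and parameters `a : Fin r → ℝ`. -/
noncomputable def mcharlier {r : ℕ} (a : Fin r → ℝ) (n : Fin r → ℕ) (x : ℝ) : ℝ :=
  ∑ k ∈ Fintype.piFinset (fun i => Finset.range (n i + 1)),
    (∏ i, ((n i).choose (k i) : ℝ) * (-a i) ^ (n i - k i)) * fallingFactorial x (∑ i, k i)

open Finset Polynomial

theorem choose_mul_add_pow_sub_eq_sum {R : Type*} [CommSemiring R] (n m : ℕ) (a c : R) :
    (n.choose m : R) * (a + c) ^ (n - m) =
      ∑ k ∈ range (n + 1),
        ((n.choose k : R) * a ^ k) * ((n - k).choose m * c ^ (n - k - m)) := by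
  have hexp : (X + C (a + c)) ^ n =
      ∑ k ∈ range (n + 1), C ((n.choose k : R) * a ^ k) * (X + C c) ^ (n - k) := by
    rw [show X + C (a + c) = C a + (X + C c) by rw [C_add]; ring, add_pow]
    refine sum_congr rfl fun k _ => ?_
    rw [C_mul, C_pow, ← Polynomial.C_eq_natCast]
    ring
  have hcoeff := congrArg (coeff · m) hexp
  simp only [coeff_X_add_C_pow, finsetSum_coeff, coeff_C_mul] at hcoeff
  rw [mul_comm, hcoeff]
  refine sum_congr rfl fun k _ => ?_
  rw [Nat.sub_right_comm]
  ring

theorem prod_choose_mul_add_pow_sub_eq_sum {R ι : Type*} [CommSemiring R] [Fintype ι]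
    [DecidableEq ι] (n m : ι → ℕ) (a c : ι → R) :
    ∏ i, ((n i).choose (m i) : R) * (a i + c i) ^ (n i - m i) =
      ∑ k ∈ Fintype.piFinset (fun i => range (n i + 1)),
        (∏ i, ((n i).choose (k i) : R) * a i ^ k i) *
          ∏ i, ((n i - k i).choose (m i) : R) * c i ^ (n i - k i - m i) := by
  simp_rw [choose_mul_add_pow_sub_eq_sum, prod_univ_sum, prod_mul_distrib]

theorem mcharlier_eq_sum_of_le {r : ℕ} (a : Fin r → ℝ) {n N : Fin r → ℕ} (hnN : n ≤ N)
    (x : ℝ) :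
    mcharlier a n x =
      ∑ m ∈ Fintype.piFinset (fun i => range (N i + 1)),
        (∏ i, ((n i).choose (m i) : ℝ) * (-a i) ^ (n i - m i)) *
          fallingFactorial x (∑ i, m i) := by
  refine sum_subset
    (Fintype.piFinset_subset _ _ fun i => range_subset_range.2 (Nat.succ_le_succ (hnN i)))
    fun m _ hm => ?_
  obtain ⟨i, hi⟩ : ∃ i, n i < m i := by simpa [Fintype.mem_piFinset, Nat.lt_succ_iff] using hm
  rw [prod_eq_zero (mem_univ i) (by simp [Nat.choose_eq_zero_of_lt hi]), zero_mul]

theorem mcharlier_connection_general (r : ℕ) (a b : Fin r → ℝ) (n : Fin r → ℕ) (x : ℝ) :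
    mcharlier b n x =
      ∑ k ∈ Fintype.piFinset (fun i => Finset.range (n i + 1)),
        (∏ i, ((n i).choose (k i) : ℝ) * (a i - b i) ^ (k i)) *
          mcharlier a (fun i => n i - k i) x := by
  calc mcharlier b n x
      = ∑ m ∈ Fintype.piFinset (fun i => range (n i + 1)),
          ∑ k ∈ Fintype.piFinset (fun i => range (n i + 1)),
            (∏ i, ((n i).choose (k i) : ℝ) * (a i - b i) ^ k i) *
              ((∏ i, ((n i - k i).choose (m i) : ℝ) * (-a i) ^ (n i - k i - m i)) *
                fallingFactorial x (∑ i, m i)) := by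
        refine sum_congr rfl fun m _ => ?_
        have hcoeff := prod_choose_mul_add_pow_sub_eq_sum n m (fun i => a i - b i) (fun i => -a i)
        have hsum (i : Fin r) : a i - b i + -a i = -b i := by ring
        simp only [hsum] at hcoeff
        simp_rw [← mul_assoc, ← sum_mul, hcoeff]
    _ = _ := by
        rw [sum_comm]
        refine sum_congr rfl fun k _ => ?_
        rw [← mul_sum, mcharlier_eq_sum_of_le a (fun i => Nat.sub_le (n i) (k i))]

/-- Connection formula between multiple Charlier polynomials with different parameters. -/
theorem mcharlier_connection (r : ℕ) (hr : 1 ≤ r) (a b : Fin r → ℝ) (n : Fin r → ℕ) (x : ℝ) :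
    mcharlier b n x =
      ∑ k ∈ Fintype.piFinset (fun i => Finset.range (n i + 1)),
        (∏ i, ((n i).choose (k i) : ℝ) * (a i - b i) ^ (k i)) *
          mcharlier a (fun i => n i - k i) x :=
  mcharlier_connection_general r a b n x
end

section
/- Let ω ≠ 0 be real and let {P_{n₁,n₂}}_{n₁,n₂≥0} be real polynomials with deg P_{n₁,n₂} = n₁ + n₂ for all n₁, n₂. Then {P_{n₁,n₂}} is a multiple Δ_ω-Appell polynomial set if and only if there exists a doubly indexed sequence of real numbers {a_{m₁,m₂}} with a_{0,0} ≠ 0 such that P_{n₁,n₂}(x) = Σ_{k₁=0}^{n₁} Σ_{k₂=0}^{n₂} C(n₁,k₁) C(n₂,k₂) a_{n₁-k₁,n₂-k₂} x^{(k₁+k₂,ω)} for all n₁, n₂ and all real x. -/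
open Polynomial

/-! The falling factorials satisfy `Δ_ω x^{(n,ω)} = n x^{(n-1,ω)}`, so for any coefficients `a`
the binomial sums of the representation satisfy the Appell recursion and take the value `a n₁ n₂`
at `0`. Conversely, a polynomial with `Δ_ω p = 0` is `ω`-periodic, hence constant, so an Appell
set is determined by its values at `0` and equals the representation with `a n₁ n₂ = P_{n₁,n₂}(0)`.
Finally `a 0 0 ≠ 0`: otherwise `P_{0,0} = 0`, so `Δ_ω P_{1,0} = 0` and `P_{1,0}` would be constant. -/

/-- The generalized falling factorial `x^{(n,ω)} = ∏_{j=0}^{n-1} (x - jω)`. -/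
noncomputable def genFallingFactorial (ω x : ℝ) (n : ℕ) : ℝ :=
  ∏ j ∈ Finset.range n, (x - j * ω)

/-- The difference operator `Δ_ω` acting on real polynomials:
`(Δ_ω f)(x) = (f(x+ω) - f(x))/ω`. -/
noncomputable def deltaOmega (ω : ℝ) (p : Polynomial ℝ) : Polynomial ℝ :=
  Polynomial.C ω⁻¹ * (p.comp (Polynomial.X + Polynomial.C ω) - p)

/-- A doubly indexed family of real polynomials is a multiple `Δ_ω`-Appell polynomial set if
`Δ_ω P_{n₁,n₂} = n₁ P_{n₁-1,n₂} + n₂ P_{n₁,n₂-1}`, where a term whose index would be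
negative is omitted (its coefficient `nᵢ` is `0`). -/
def IsMultipleDeltaAppell (ω : ℝ) (P : ℕ → ℕ → Polynomial ℝ) : Prop :=
  ∀ n₁ n₂ : ℕ, deltaOmega ω (P n₁ n₂) =
    Polynomial.C (n₁ : ℝ) * P (n₁ - 1) n₂ + Polynomial.C (n₂ : ℝ) * P n₁ (n₂ - 1)

open Finset

noncomputable def fallingFactorialPoly (ω : ℝ) (n : ℕ) : ℝ[X] :=
  ∏ j ∈ range n, (X - C (j * ω))

section FallingFactorial

variable {ω : ℝ}

theorem eval_fallingFactorialPoly (x : ℝ) (n : ℕ) :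
    (fallingFactorialPoly ω n).eval x = genFallingFactorial ω x n := by
  simp [fallingFactorialPoly, genFallingFactorial, eval_prod]

theorem fallingFactorialPoly_eval_zero {n : ℕ} (hn : n ≠ 0) :
    (fallingFactorialPoly ω n).eval 0 = 0 := by
  rw [eval_fallingFactorialPoly]
  exact prod_eq_zero (mem_range.mpr (Nat.pos_of_ne_zero hn)) (by simp)

theorem fallingFactorialPoly_succ (n : ℕ) :
    fallingFactorialPoly ω (n + 1) = fallingFactorialPoly ω n * (X - C (n * ω)) :=
  prod_range_succ (fun j : ℕ => X - C (j * ω)) n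

theorem fallingFactorialPoly_succ_comp_X_add_C (n : ℕ) :
    (fallingFactorialPoly ω (n + 1)).comp (X + C ω) = (X + C ω) * fallingFactorialPoly ω n := by
  rw [fallingFactorialPoly, Polynomial.prod_comp, prod_range_succ', mul_comm]
  congr 1
  · simp
  · refine prod_congr rfl fun j _ => ?_
    rw [sub_comp, X_comp, C_comp, Nat.cast_succ, add_one_mul, C_add]
    ring

theorem deltaOmega_fallingFactorialPoly (hω : ω ≠ 0) (n : ℕ) :
    deltaOmega ω (fallingFactorialPoly ω n) = (n : ℝ) • fallingFactorialPoly ω (n - 1) := by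
  rcases n with _ | n
  · simp [deltaOmega, fallingFactorialPoly]
  have hdiff : (X + C ω) * fallingFactorialPoly ω n - fallingFactorialPoly ω (n + 1) =
      C ((n + 1) * ω) * fallingFactorialPoly ω n := by
    rw [fallingFactorialPoly_succ]
    simp only [add_mul, one_mul, C_add, C_mul]
    ring
  have hscalar : ω⁻¹ * ((n + 1) * ω) = ((n + 1 : ℕ) : ℝ) := by push_cast; field_simp
  rw [deltaOmega, fallingFactorialPoly_succ_comp_X_add_C, hdiff, ← mul_assoc, ← C_mul, hscalar,
    C_mul', Nat.add_sub_cancel]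

end FallingFactorial

noncomputable def deltaOmegaLinearMap (ω : ℝ) : ℝ[X] →ₗ[ℝ] ℝ[X] where
  toFun := deltaOmega ω
  map_add' p q := by simp only [deltaOmega, add_comp]; ring
  map_smul' c p := by simp only [deltaOmega, ← C_mul', mul_comp, C_comp, RingHom.id_apply]; ring

@[simp]
theorem deltaOmegaLinearMap_apply (ω : ℝ) (p : ℝ[X]) :
    deltaOmegaLinearMap ω p = deltaOmega ω p := rfl

theorem eq_C_eval_zero_of_comp_X_add_C_eq {ω : ℝ} (hω : ω ≠ 0) {p : ℝ[X]}
    (h : p.comp (X + C ω) = p) : p = C (p.eval 0) := by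
  have hshift : ∀ x, p.eval (x + ω) = p.eval x := fun x => by
    conv_rhs => rw [← h]
    simp [eval_comp]
  have hmul : ∀ k : ℕ, p.eval (k * ω) = p.eval 0 := by
    intro k
    induction k with
    | zero => simp
    | succ k ih => rw [Nat.cast_succ, add_one_mul, hshift, ih]
  refine eq_of_infinite_eval_eq _ _ (Set.infinite_of_injective_forall_mem
    (f := fun k : ℕ => (k : ℝ) * ω) (fun i j hij => ?_) (fun k => ?_))
  · exact_mod_cast mul_right_cancel₀ hω hij
  · simp [hmul]

theorem eq_C_eval_zero_of_deltaOmega_eq_zero {ω : ℝ} (hω : ω ≠ 0) {p : ℝ[X]}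
    (h : deltaOmega ω p = 0) : p = C (p.eval 0) := by
  refine eq_C_eval_zero_of_comp_X_add_C_eq hω (sub_eq_zero.mp ?_)
  simpa [deltaOmega, hω] using h

theorem eq_of_deltaOmega_eq {ω : ℝ} (hω : ω ≠ 0) {p q : ℝ[X]}
    (h : deltaOmega ω p = deltaOmega ω q) (h0 : p.eval 0 = q.eval 0) : p = q := by
  have hsub : deltaOmega ω (p - q) = 0 := by
    rw [← deltaOmegaLinearMap_apply, map_sub]; simp [h]
  have := eq_C_eval_zero_of_deltaOmega_eq_zero hω hsub
  rwa [eval_sub, h0, sub_self, C_0, sub_eq_zero] at this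

example : True := trivial

noncomputable def appellRep (ω : ℝ) (a : ℕ → ℕ → ℝ) (n₁ n₂ : ℕ) : ℝ[X] :=
  ∑ k₁ ∈ range (n₁ + 1), ∑ k₂ ∈ range (n₂ + 1),
    (n₁.choose k₁ * n₂.choose k₂ * a (n₁ - k₁) (n₂ - k₂) : ℝ) • fallingFactorialPoly ω (k₁ + k₂)

section AppellRep

variable {ω : ℝ} (a : ℕ → ℕ → ℝ)

theorem eval_appellRep (n₁ n₂ : ℕ) (x : ℝ) :
    (appellRep ω a n₁ n₂).eval x =
      ∑ k₁ ∈ range (n₁ + 1), ∑ k₂ ∈ range (n₂ + 1),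
        (n₁.choose k₁ : ℝ) * (n₂.choose k₂ : ℝ) * a (n₁ - k₁) (n₂ - k₂) *
          genFallingFactorial ω x (k₁ + k₂) := by
  simp [appellRep, eval_finsetSum, eval_fallingFactorialPoly]

theorem appellRep_eval_zero (n₁ n₂ : ℕ) : (appellRep ω a n₁ n₂).eval 0 = a n₁ n₂ := by
  simp only [appellRep, eval_finsetSum, eval_smul, smul_eq_mul]
  rw [sum_eq_single_of_mem 0 (by simp), sum_eq_single_of_mem 0 (by simp)]
  · simp [fallingFactorialPoly]
  · intro k₂ _ hk₂
    simp [fallingFactorialPoly_eval_zero hk₂]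
  · intro k₁ _ hk₁
    refine sum_eq_zero fun k₂ _ => ?_
    simp [fallingFactorialPoly_eval_zero (by omega : k₁ + k₂ ≠ 0)]

theorem appellRep_swap (n₁ n₂ : ℕ) :
    appellRep ω a n₁ n₂ = appellRep ω (fun i j => a j i) n₂ n₁ := by
  rw [appellRep, appellRep, sum_comm]
  refine sum_congr rfl fun k₂ _ => sum_congr rfl fun k₁ _ => ?_
  rw [mul_comm (n₁.choose k₁ : ℝ), add_comm]

theorem sum_sum_mul_smul_fallingFactorialPoly_pred (n₁ n₂ : ℕ) :
    ∑ k₁ ∈ range (n₁ + 1), ∑ k₂ ∈ range (n₂ + 1),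
      (k₁ * (n₁.choose k₁ * n₂.choose k₂ * a (n₁ - k₁) (n₂ - k₂)) : ℝ) •
        fallingFactorialPoly ω (k₁ + k₂ - 1) =
      (n₁ : ℝ) • appellRep ω a (n₁ - 1) n₂ := by
  rcases n₁ with _ | n
  · simp
  rw [sum_range_succ', appellRep, Nat.add_sub_cancel, smul_sum]
  simp only [CharP.cast_eq_zero, zero_mul, zero_smul, sum_const_zero, add_zero]
  refine sum_congr rfl fun k _ => ?_
  rw [smul_sum]
  refine sum_congr rfl fun k₂ _ => ?_
  rw [smul_smul, show k + 1 + k₂ - 1 = k + k₂ by omega, Nat.add_sub_add_right]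
  have hchoose : ((n + 1 : ℕ) : ℝ) * n.choose k = (n + 1).choose (k + 1) * ((k + 1 : ℕ) : ℝ) := by
    exact_mod_cast Nat.add_one_mul_choose_eq n k
  congr 1
  push_cast at hchoose ⊢
  linear_combination (-(n₂.choose k₂ * a (n - k) (n₂ - k₂))) * hchoose

theorem deltaOmega_appellRep (hω : ω ≠ 0) (n₁ n₂ : ℕ) :
    deltaOmega ω (appellRep ω a n₁ n₂) =
      (n₁ : ℝ) • appellRep ω a (n₁ - 1) n₂ + (n₂ : ℝ) • appellRep ω a n₁ (n₂ - 1) := by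
  have hterm : ∀ (k₁ k₂ : ℕ) (c : ℝ), deltaOmega ω (c • fallingFactorialPoly ω (k₁ + k₂)) =
      (k₁ * c) • fallingFactorialPoly ω (k₁ + k₂ - 1) +
        (k₂ * c) • fallingFactorialPoly ω (k₂ + k₁ - 1) := by
    intro k₁ k₂ c
    rw [← deltaOmegaLinearMap_apply, map_smul, deltaOmegaLinearMap_apply,
      deltaOmega_fallingFactorialPoly hω, smul_smul, add_comm k₂ k₁, ← add_smul]
    push_cast
    ring_nf
  rw [← deltaOmegaLinearMap_apply, appellRep]
  simp only [map_sum, deltaOmegaLinearMap_apply, hterm, sum_add_distrib]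
  -- the `k₂`-half is the `k₁`-half of the transposed family
  rw [sum_sum_mul_smul_fallingFactorialPoly_pred, appellRep_swap a n₁ (n₂ - 1),
    ← sum_sum_mul_smul_fallingFactorialPoly_pred (fun i j => a j i) n₂ n₁]
  congr 1
  rw [sum_comm]
  refine sum_congr rfl fun k₂ _ => sum_congr rfl fun k₁ _ => ?_
  rw [mul_comm (n₁.choose k₁ : ℝ)]

theorem isMultipleDeltaAppell_appellRep (hω : ω ≠ 0) :
    IsMultipleDeltaAppell ω (appellRep ω a) := fun n₁ n₂ => by
  simp only [deltaOmega_appellRep a hω, C_mul']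

end AppellRep

theorem IsMultipleDeltaAppell.eq_of_eval_zero_eq {ω : ℝ} (hω : ω ≠ 0) {P Q : ℕ → ℕ → ℝ[X]}
    (hP : IsMultipleDeltaAppell ω P) (hQ : IsMultipleDeltaAppell ω Q)
    (h0 : ∀ n₁ n₂, (P n₁ n₂).eval 0 = (Q n₁ n₂).eval 0) : P = Q := by
  suffices h : ∀ N n₁ n₂, n₁ + n₂ < N → P n₁ n₂ = Q n₁ n₂ from
    funext₂ fun n₁ n₂ => h _ n₁ n₂ (Nat.lt_succ_self _)
  intro N
  induction N with
  | zero => intro n₁ n₂ h; omega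
  | succ N ih =>
    intro n₁ n₂ hN
    refine eq_of_deltaOmega_eq hω ?_ (h0 n₁ n₂)
    rw [hP, hQ]
    congr 1
    · rcases n₁ with _ | n₁
      · simp
      · rw [ih _ _ (by omega)]
    · rcases n₂ with _ | n₂
      · simp
      · rw [ih _ _ (by omega)]

theorem IsMultipleDeltaAppell.eval_zero_zero_ne_zero {ω : ℝ} (hω : ω ≠ 0)
    {P : ℕ → ℕ → ℝ[X]} (hP : IsMultipleDeltaAppell ω P)
    (h₀₀ : (P 0 0).natDegree = 0) (h₁₀ : (P 1 0).natDegree = 1) : (P 0 0).eval 0 ≠ 0 := by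
  intro hzero
  have hP₀₀ : P 0 0 = 0 := by
    rw [eq_C_of_natDegree_eq_zero h₀₀, coeff_zero_eq_eval_zero, hzero, C_0]
  have hΔ : deltaOmega ω (P 1 0) = 0 := by simpa [hP₀₀] using hP 1 0
  have := congrArg natDegree (eq_C_eval_zero_of_deltaOmega_eq_zero hω hΔ)
  rw [h₁₀, natDegree_C] at this
  exact one_ne_zero this

/-- A polynomial set is multiple `Δ_ω`-Appell iff it has an explicit representation in
terms of the generalized falling factorials with coefficients `a_{m₁,m₂}`, `a_{0,0} ≠ 0`. -/
theorem multipleDeltaAppell_iff_representation (ω : ℝ) (hω : ω ≠ 0)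
    (P : ℕ → ℕ → Polynomial ℝ) (hdeg : ∀ n₁ n₂ : ℕ, (P n₁ n₂).natDegree = n₁ + n₂) :
    IsMultipleDeltaAppell ω P ↔
      ∃ a : ℕ → ℕ → ℝ, a 0 0 ≠ 0 ∧
        ∀ (n₁ n₂ : ℕ) (x : ℝ),
          (P n₁ n₂).eval x =
            ∑ k₁ ∈ Finset.range (n₁ + 1), ∑ k₂ ∈ Finset.range (n₂ + 1),
              (n₁.choose k₁ : ℝ) * (n₂.choose k₂ : ℝ) * a (n₁ - k₁) (n₂ - k₂) *
                genFallingFactorial ω x (k₁ + k₂) := by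
  constructor
  · intro hP
    set a : ℕ → ℕ → ℝ := fun n₁ n₂ => (P n₁ n₂).eval 0
    have hPa : P = appellRep ω a :=
      hP.eq_of_eval_zero_eq hω (isMultipleDeltaAppell_appellRep a hω)
        fun n₁ n₂ => (appellRep_eval_zero a n₁ n₂).symm
    refine ⟨a, hP.eval_zero_zero_ne_zero hω (hdeg 0 0) (hdeg 1 0), fun n₁ n₂ x => ?_⟩
    rw [hPa, eval_appellRep]
  · rintro ⟨a, -, hrep⟩
    have hPa : P = appellRep ω a :=
      funext₂ fun n₁ n₂ => Polynomial.funext fun x => by rw [hrep, eval_appellRep]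
    exact hPa ▸ isMultipleDeltaAppell_appellRep a hω
end

section
/- Let ω ≠ 0 be real, let {P_{n₁,n₂}}_{n₁,n₂≥0} be real polynomials, and let {a_{m₁,m₂}} be a doubly indexed sequence of real numbers with a_{0,0} ≠ 0. Then P_{n₁,n₂}(x) = Σ_{k₁=0}^{n₁} Σ_{k₂=0}^{n₂} C(n₁,k₁) C(n₂,k₂) a_{n₁-k₁,n₂-k₂} x^{(k₁+k₂,ω)} holds for all n₁, n₂ and all real x if and only if P_{n₁,n₂}(x) = Σ_{k₁=0}^{n₁} Σ_{k₂=0}^{n₂} C(n₁,k₁) C(n₂,k₂) · ((n₁+n₂-k₁-k₂)!/(n₁+n₂)!) · a_{k₁,k₂} · (Δ_ω^{k₁+k₂} x^{(n₁+n₂,ω)}) holds for all n₁, n₂ and all real x, where Δ_ω^{m} denotes the m-fold iterate of Δ_ω. -/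
/-!
Iterating `Δ_ω x^{(n+1,ω)} = (n+1) x^{(n,ω)}` gives `Δ_ω^k x^{(n,ω)} = n!/(n-k)! · x^{(n-k,ω)}`,
so the `(k₁,k₂)` term of the second sum is `C(n₁,k₁) C(n₂,k₂) a_{k₁,k₂} x^{(n₁-k₁+n₂-k₂,ω)}`.
Reflecting `kᵢ ↦ nᵢ - kᵢ` and using `C(n,k) = C(n,n-k)` turns it into the first sum, so the two
representations have the same right-hand sides.
-/

open Polynomial

/-- The generalized falling factorial `x^{(n,ω)}` as a polynomial. -/
noncomputable def genFallingFactorialPoly (ω : ℝ) (n : ℕ) : Polynomial ℝ :=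
  ∏ j ∈ Finset.range n, (Polynomial.X - Polynomial.C (j * ω))

open Finset

theorem sum_range_sum_range_choose_mul_reflect {R : Type*} [CommSemiring R] (n₁ n₂ : ℕ)
    (a g : ℕ → ℕ → R) :
    ∑ k₁ ∈ range (n₁ + 1), ∑ k₂ ∈ range (n₂ + 1),
        (n₁.choose k₁ : R) * n₂.choose k₂ * a k₁ k₂ * g (n₁ - k₁) (n₂ - k₂) =
      ∑ k₁ ∈ range (n₁ + 1), ∑ k₂ ∈ range (n₂ + 1),
        (n₁.choose k₁ : R) * n₂.choose k₂ * a (n₁ - k₁) (n₂ - k₂) * g k₁ k₂ := by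
  rw [← sum_range_reflect]
  refine sum_congr rfl fun k₁ hk₁ => ?_
  rw [← sum_range_reflect]
  refine sum_congr rfl fun k₂ hk₂ => ?_
  rw [mem_range] at hk₁ hk₂
  rw [Nat.add_sub_cancel, Nat.add_sub_cancel, Nat.choose_symm (by omega),
    Nat.choose_symm (by omega), Nat.sub_sub_self (by omega), Nat.sub_sub_self (by omega)]

theorem eval_genFallingFactorialPoly (ω x : ℝ) (n : ℕ) :
    (genFallingFactorialPoly ω n).eval x = genFallingFactorial ω x n := by
  simp [genFallingFactorialPoly, genFallingFactorial, eval_prod]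

theorem genFallingFactorial_add_succ (ω x : ℝ) (n : ℕ) :
    genFallingFactorial ω (x + ω) (n + 1) = (x + ω) * genFallingFactorial ω x n := by
  rw [genFallingFactorial, prod_range_succ', mul_comm]
  congr 1
  · simp
  · refine prod_congr rfl fun j _ => ?_
    push_cast
    ring

theorem commute_deltaOmega_C_mul (ω c : ℝ) :
    Function.Commute (deltaOmega ω) (C c * ·) := fun p => by
  simp only [deltaOmega, mul_comp, C_comp]
  ring

section Delta

variable {ω : ℝ}

theorem deltaOmega_genFallingFactorialPoly_succ (hω : ω ≠ 0) (n : ℕ) :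
    deltaOmega ω (genFallingFactorialPoly ω (n + 1)) =
      C ((n : ℝ) + 1) * genFallingFactorialPoly ω n := by
  refine Polynomial.funext fun x => ?_
  have hlast : genFallingFactorial ω x (n + 1) = genFallingFactorial ω x n * (x - n * ω) :=
    prod_range_succ _ _
  simp only [deltaOmega, eval_mul, eval_C, eval_sub, eval_comp, eval_add, eval_X,
    eval_genFallingFactorialPoly, genFallingFactorial_add_succ, hlast]
  field_simp
  ring

theorem iterate_deltaOmega_genFallingFactorialPoly (hω : ω ≠ 0) {m n : ℕ} (hmn : m ≤ n) :
    (deltaOmega ω)^[m] (genFallingFactorialPoly ω n) =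
      C (n.descFactorial m : ℝ) * genFallingFactorialPoly ω (n - m) := by
  induction m generalizing n with
  | zero => simp
  | succ m ih =>
    obtain ⟨n, rfl⟩ : ∃ n', n = n' + 1 := ⟨n - 1, by omega⟩
    rw [Function.iterate_succ_apply, deltaOmega_genFallingFactorialPoly_succ hω,
      ((commute_deltaOmega_C_mul ω _).iterate_left m).eq, ih (by omega),
      Nat.succ_descFactorial_succ, Nat.add_sub_add_right, ← mul_assoc, ← C_mul]
    push_cast
    ring

theorem factorial_div_mul_eval_iterate_deltaOmega (hω : ω ≠ 0) (x : ℝ) {k n : ℕ}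
    (hkn : k ≤ n) :
    ((n - k).factorial / n.factorial : ℝ) *
        ((deltaOmega ω)^[k] (genFallingFactorialPoly ω n)).eval x =
      genFallingFactorial ω x (n - k) := by
  have hfac : ((n - k).factorial * n.descFactorial k : ℝ) = n.factorial := by
    exact_mod_cast Nat.factorial_mul_descFactorial hkn
  rw [iterate_deltaOmega_genFallingFactorialPoly hω hkn, eval_mul, eval_C,
    eval_genFallingFactorialPoly, ← mul_assoc, div_mul_eq_mul_div, hfac,
    div_self (by positivity), one_mul]

end Delta

theorem representation_iff_delta_representation_general (ω : ℝ) (hω : ω ≠ 0)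
    (P : ℕ → ℕ → Polynomial ℝ) (a : ℕ → ℕ → ℝ) :
    (∀ (n₁ n₂ : ℕ) (x : ℝ),
        (P n₁ n₂).eval x =
          ∑ k₁ ∈ Finset.range (n₁ + 1), ∑ k₂ ∈ Finset.range (n₂ + 1),
            (n₁.choose k₁ : ℝ) * (n₂.choose k₂ : ℝ) * a (n₁ - k₁) (n₂ - k₂) *
              genFallingFactorial ω x (k₁ + k₂)) ↔
      (∀ (n₁ n₂ : ℕ) (x : ℝ),
        (P n₁ n₂).eval x =
          ∑ k₁ ∈ Finset.range (n₁ + 1), ∑ k₂ ∈ Finset.range (n₂ + 1),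
            (n₁.choose k₁ : ℝ) * (n₂.choose k₂ : ℝ) *
              (((n₁ + n₂ - k₁ - k₂).factorial : ℝ) / ((n₁ + n₂).factorial : ℝ)) *
                a k₁ k₂ *
                  ((deltaOmega ω)^[k₁ + k₂] (genFallingFactorialPoly ω (n₁ + n₂))).eval x) := by
  have hsum : ∀ (n₁ n₂ : ℕ) (x : ℝ),
      ∑ k₁ ∈ range (n₁ + 1), ∑ k₂ ∈ range (n₂ + 1),
          (n₁.choose k₁ : ℝ) * (n₂.choose k₂ : ℝ) *
            (((n₁ + n₂ - k₁ - k₂).factorial : ℝ) / ((n₁ + n₂).factorial : ℝ)) * a k₁ k₂ *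
              ((deltaOmega ω)^[k₁ + k₂] (genFallingFactorialPoly ω (n₁ + n₂))).eval x =
        ∑ k₁ ∈ range (n₁ + 1), ∑ k₂ ∈ range (n₂ + 1),
          (n₁.choose k₁ : ℝ) * (n₂.choose k₂ : ℝ) * a (n₁ - k₁) (n₂ - k₂) *
            genFallingFactorial ω x (k₁ + k₂) := by
    intro n₁ n₂ x
    refine (sum_congr rfl fun k₁ hk₁ => sum_congr rfl fun k₂ hk₂ => ?_).trans
      (sum_range_sum_range_choose_mul_reflect n₁ n₂ a fun i j => genFallingFactorial ω x (i + j))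
    rw [mem_range] at hk₁ hk₂
    beta_reduce
    rw [mul_right_comm _ _ (a k₁ k₂), mul_assoc, Nat.sub_sub,
      factorial_div_mul_eval_iterate_deltaOmega hω x (by omega),
      show n₁ + n₂ - (k₁ + k₂) = n₁ - k₁ + (n₂ - k₂) by omega]
  exact forall₃_congr fun n₁ n₂ x => by rw [hsum]

/-- The representation of `P_{n₁,n₂}` in terms of generalized falling factorials with
coefficients `a_{n₁-k₁,n₂-k₂}` is equivalent to the representation in terms of the iterated
differences `Δ_ω^{k₁+k₂} x^{(n₁+n₂,ω)}` with coefficients `a_{k₁,k₂}`. -/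
theorem representation_iff_delta_representation (ω : ℝ) (hω : ω ≠ 0)
    (P : ℕ → ℕ → Polynomial ℝ) (a : ℕ → ℕ → ℝ) (ha : a 0 0 ≠ 0) :
    (∀ (n₁ n₂ : ℕ) (x : ℝ),
        (P n₁ n₂).eval x =
          ∑ k₁ ∈ Finset.range (n₁ + 1), ∑ k₂ ∈ Finset.range (n₂ + 1),
            (n₁.choose k₁ : ℝ) * (n₂.choose k₂ : ℝ) * a (n₁ - k₁) (n₂ - k₂) *
              genFallingFactorial ω x (k₁ + k₂)) ↔
      (∀ (n₁ n₂ : ℕ) (x : ℝ),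
        (P n₁ n₂).eval x =
          ∑ k₁ ∈ Finset.range (n₁ + 1), ∑ k₂ ∈ Finset.range (n₂ + 1),
            (n₁.choose k₁ : ℝ) * (n₂.choose k₂ : ℝ) *
              (((n₁ + n₂ - k₁ - k₂).factorial : ℝ) / ((n₁ + n₂).factorial : ℝ)) *
                a k₁ k₂ *
                  ((deltaOmega ω)^[k₁ + k₂] (genFallingFactorialPoly ω (n₁ + n₂))).eval x) :=
  representation_iff_delta_representation_general ω hω P a
end
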